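/- Let ρ be a 2×2 density matrix with Bloch components nᵢ = Re Tr(ρ·σᵢ) for i ∈ {x,y,z}, and let θ, φ ∈ ℝ. Define the basis vectors u = (cos(θ/2), e^{iφ}·sin(θ/2)) and d = (sin(θ/2), −e^{iφ}·cos(θ/2)) in ℂ², and let M be the 2×2 matrix of ρ in the basis B₁ = {u, d}, i.e. M₀₀ = uᴴρu, M₀₁ = uᴴρd, M₁₀ = dᴴρu, M₁₁ = dᴴρd. Then the robustness of imaginarity of ρ in the basis B₁ satisfies (1/2)‖M − Mᵀ‖₁ = |n_y·cos φ − n_x·sin φ|. -/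

import Mathlib

/-!
`M - Mᵀ` is antisymmetric with off-diagonal entry `z = M₀₁ - M₁₀`, so `(M - Mᵀ)ᴴ (M - Mᵀ) = |z|² • 1`
and its trace norm is `2 |z|`. Expanding `M₀₁ - M₁₀` in the orthonormal basis `{u, d}` and using
`ρ₁₀ = conj ρ₀₁` gives `z = conj (e^{iφ} ρ₀₁) - e^{iφ} ρ₀₁ = i (n_y cos φ - n_x sin φ)`.
-/

open Matrix Kronecker
open scoped ComplexOrder

/-- Trace norm of a square complex matrix: `Tr[sqrt(Aᴴ A)]`. -/
noncomputable def traceNorm {n : Type*} [Fintype n] [DecidableEq n]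
    (A : Matrix n n ℂ) : ℝ :=
  (((Matrix.posSemidef_conjTranspose_mul_self A).1.eigenvectorUnitary : Matrix n n ℂ) *
    diagonal (((↑) : ℝ → ℂ) ∘ (√·) ∘ (Matrix.posSemidef_conjTranspose_mul_self A).1.eigenvalues) *
    (star ((Matrix.posSemidef_conjTranspose_mul_self A).1.eigenvectorUnitary : Matrix n n ℂ))).trace.re

/-- Robustness of imaginarity: `(1/2) ‖ρ - ρᵀ‖₁`. -/
noncomputable def roi {n : Type*} [Fintype n] [DecidableEq n]
    (ρ : Matrix n n ℂ) : ℝ :=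
  (1 / 2) * traceNorm (ρ - ρ.transpose)

def σx : Matrix (Fin 2) (Fin 2) ℂ := !![0, 1; 1, 0]
def σy : Matrix (Fin 2) (Fin 2) ℂ := !![0, -Complex.I; Complex.I, 0]

section

variable {n : Type*} [Fintype n] [DecidableEq n]

lemma traceNorm_eq_sum_sqrt_eigenvalues (A : Matrix n n ℂ) :
    traceNorm A = ∑ i, √((posSemidef_conjTranspose_mul_self A).1.eigenvalues i) := by
  rw [traceNorm, trace_mul_cycle, Unitary.coe_star_mul_self, one_mul, trace_diagonal]
  simp [Complex.re_sum]

lemma Matrix.IsHermitian.eigenvalues_eq_of_eq_smul_one {A : Matrix n n ℂ} (hA : A.IsHermitian)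
    {r : ℝ} (h : A = (r : ℂ) • 1) (i : n) :
    hA.eigenvalues i = r := by
  have : Nonempty n := ⟨i⟩
  have hmem : hA.eigenvalues i ∈ spectrum ℝ (algebraMap ℝ (Matrix n n ℂ) r) := by
    rw [Algebra.algebraMap_eq_smul_one, ← Complex.coe_smul, ← h]
    exact hA.eigenvalues_mem_spectrum_real i
  rwa [spectrum.scalar_eq, Set.mem_singleton_iff] at hmem

lemma traceNorm_of_conjTranspose_mul_self_eq_smul_one {A : Matrix n n ℂ} {r : ℝ}
    (h : Aᴴ * A = (r : ℂ) • 1) :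
    traceNorm A = Fintype.card n * √r := by
  simp [traceNorm_eq_sum_sqrt_eigenvalues, IsHermitian.eigenvalues_eq_of_eq_smul_one _ h]

end

lemma traceNorm_fin_two_antisymm (z : ℂ) : traceNorm !![0, z; -z, 0] = 2 * ‖z‖ := by
  have h : (!![0, z; -z, 0])ᴴ * !![0, z; -z, 0] = ((‖z‖ ^ 2 : ℝ) : ℂ) • 1 := by
    ext i j
    fin_cases i <;> fin_cases j <;> simp [mul_apply, Complex.conj_mul']
  rw [traceNorm_of_conjTranspose_mul_self_eq_smul_one h, Real.sqrt_sq (norm_nonneg z)]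
  simp

lemma sub_transpose_fin_two (M : Matrix (Fin 2) (Fin 2) ℂ) :
    M - Mᵀ = !![0, M 0 1 - M 1 0; -(M 0 1 - M 1 0), 0] := by
  ext i j
  fin_cases i <;> fin_cases j <;> simp

lemma roi_fin_two (M : Matrix (Fin 2) (Fin 2) ℂ) : roi M = ‖M 0 1 - M 1 0‖ := by
  rw [roi, sub_transpose_fin_two, traceNorm_fin_two_antisymm]
  ring

lemma trace_mul_σx (ρ : Matrix (Fin 2) (Fin 2) ℂ) : (ρ * σx).trace = ρ 0 1 + ρ 1 0 := by
  simp [σx, trace_fin_two, mul_apply, add_comm]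

lemma trace_mul_σy (ρ : Matrix (Fin 2) (Fin 2) ℂ) :
    (ρ * σy).trace = Complex.I * (ρ 0 1 - ρ 1 0) := by
  simp only [σy, trace_fin_two, mul_apply, Fin.sum_univ_two, of_apply, cons_val', cons_val_zero,
    cons_val_one, cons_val_fin_one, mul_zero, zero_add, add_zero]
  ring

lemma star_dotProduct_mulVec_sub_fin_two (ρ : Matrix (Fin 2) (Fin 2) ℂ) (c s : ℝ) (e : ℂ) :
    star ![(c : ℂ), e * s] ⬝ᵥ ρ *ᵥ ![(s : ℂ), -(e * c)] -
        star ![(s : ℂ), -(e * c)] ⬝ᵥ ρ *ᵥ ![(c : ℂ), e * s] =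
      ((c ^ 2 + s ^ 2 : ℝ) : ℂ) * (star e * ρ 1 0 - e * ρ 0 1) := by
  simp only [dotProduct, mulVec, Fin.sum_univ_two, Pi.star_apply, cons_val_zero, cons_val_one,
    cons_val_fin_one, Complex.star_def, map_mul, map_neg, Complex.conj_ofReal]
  push_cast
  ring

lemma star_sub_self_exp_mul (w : ℂ) (φ : ℝ) :
    star (Complex.exp (φ * Complex.I) * w) - Complex.exp (φ * Complex.I) * w =
      Complex.I * (((Complex.I * (w - star w)).re * Real.cos φ
        - (w + star w).re * Real.sin φ : ℝ) : ℂ) := by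
  apply Complex.ext
  · simp [Complex.exp_mul_I, ← Complex.ofReal_cos, ← Complex.ofReal_sin]
  · simp [Complex.exp_mul_I, ← Complex.ofReal_cos, ← Complex.ofReal_sin]
    ring

theorem stmt3_general (ρ : Matrix (Fin 2) (Fin 2) ℂ) (hρ : ρ.PosSemidef)
    (θ φ : ℝ) (u d : Fin 2 → ℂ)
    (hu : u = ![(Real.cos (θ / 2) : ℂ),
      Complex.exp (φ * Complex.I) * (Real.sin (θ / 2) : ℂ)])
    (hd : d = ![(Real.sin (θ / 2) : ℂ),
      -(Complex.exp (φ * Complex.I) * (Real.cos (θ / 2) : ℂ))])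
    (M : Matrix (Fin 2) (Fin 2) ℂ)
    (hM : M = Matrix.of fun i j : Fin 2 => star (![u, d] i) ⬝ᵥ ρ.mulVec (![u, d] j)) :
    roi M = |((ρ * σy).trace).re * Real.cos φ - ((ρ * σx).trace).re * Real.sin φ| := by
  have hρ10 : ρ 1 0 = star (ρ 0 1) := (hρ.1.apply 1 0).symm
  subst hM hu hd
  simp only [roi_fin_two, of_apply, cons_val_zero, cons_val_one]
  rw [star_dotProduct_mulVec_sub_fin_two, Real.cos_sq_add_sin_sq, Complex.ofReal_one, one_mul,
    hρ10, ← star_mul', star_sub_self_exp_mul, trace_mul_σx, trace_mul_σy, hρ10, norm_mul,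
    Complex.norm_I, one_mul, Complex.norm_real, Real.norm_eq_abs]

/-- the robustness of imaginarity of a qubit state `ρ` in the basis
`B₁ = {u, d}` equals `|n_y cos φ − n_x sin φ|`. -/
theorem stmt3 (ρ : Matrix (Fin 2) (Fin 2) ℂ) (hρ : ρ.PosSemidef) (hTr : ρ.trace = 1)
    (θ φ : ℝ) (u d : Fin 2 → ℂ)
    (hu : u = ![(Real.cos (θ / 2) : ℂ),
      Complex.exp (φ * Complex.I) * (Real.sin (θ / 2) : ℂ)])
    (hd : d = ![(Real.sin (θ / 2) : ℂ),
      -(Complex.exp (φ * Complex.I) * (Real.cos (θ / 2) : ℂ))])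
    (M : Matrix (Fin 2) (Fin 2) ℂ)
    (hM : M = Matrix.of fun i j : Fin 2 => star (![u, d] i) ⬝ᵥ ρ.mulVec (![u, d] j)) :
    roi M = |((ρ * σy).trace).re * Real.cos φ - ((ρ * σx).trace).re * Real.sin φ| :=
  stmt3_general ρ hρ θ φ u d hu hd M hM
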